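/- arXiv:1210.4799 — 2 statements merged into one kernel-verified Lean document; each statement's English description precedes it below -/
import Mathlib

section
/- Let V be a finite-dimensional real vector space, S a finite nonempty set of linear functionals on V, x(v) = max_{ℓ ∈ S} ℓ(v), and Argmax(v) = {ℓ ∈ S : ℓ(v) = x(v)}. Then for any φ, ψ ∈ V there exists m ∈ ℕ such that Argmax(mφ + ψ) ⊆ Argmax(φ). (This is the statement that φ is subordinate to mφ + ψ for some m, part (2) of the subordination lemma.) -/
/-!
For each of the finitely many pairs `ℓ, ℓ'` in `S` with `ℓ φ < ℓ' φ`, the gap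
`m (ℓ' φ - ℓ φ)` eventually exceeds `ℓ ψ - ℓ' ψ`, so for large `m` no such `ℓ` can maximise
`m φ + ψ`.
-/

open Filter

lemma eventually_le_imp_le_of_natCast_mul_add_le (a b c d : ℝ) :
    ∀ᶠ m : ℕ in atTop, (m : ℝ) * a + c ≤ m * b + d → a ≤ b := by
  by_cases hab : a ≤ b
  · exact Eventually.of_forall fun _ _ => hab
  have hgrow : Tendsto (fun m : ℕ => (m : ℝ) * (a - b)) atTop atTop :=
    tendsto_natCast_atTop_atTop.atTop_mul_const (by linarith)
  filter_upwards [hgrow.eventually_gt_atTop (d - c)] with m hm hle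
  nlinarith

lemma Finset.eventually_forall_le_of_natCast_mul_add_le {ι : Type*} (s : Finset ι)
    (f g : ι → ℝ) :
    ∀ᶠ m : ℕ in atTop, ∀ i ∈ s, ∀ j ∈ s,
      (m : ℝ) * f j + g j ≤ m * f i + g i → f j ≤ f i := by
  simp only [eventually_all_finset]
  exact fun i _ j _ => eventually_le_imp_le_of_natCast_mul_add_le _ _ _ _

theorem exists_subordinate_perturbation_general
    {V : Type*} [AddCommGroup V] [Module ℝ V]
    (S : Finset (V →ₗ[ℝ] ℝ)) (hS : S.Nonempty)
    (x : V → ℝ) (hx : ∀ v, x v = S.sup' hS (fun ℓ => ℓ v))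
    (Argmax : V → Set (V →ₗ[ℝ] ℝ))
    (hA : ∀ v, Argmax v = {ℓ | ℓ ∈ S ∧ ℓ v = x v})
    (φ ψ : V) :
    ∃ m : ℕ, Argmax ((m : ℝ) • φ + ψ) ⊆ Argmax φ := by
  obtain ⟨m, hm⟩ :=
    (S.eventually_forall_le_of_natCast_mul_add_le (fun ℓ => ℓ φ) (fun ℓ => ℓ ψ)).exists
  refine ⟨m, fun ℓ hℓ => ?_⟩
  rw [hA] at hℓ ⊢
  obtain ⟨hℓS, hℓmax⟩ := hℓ
  have hℓ_top : ∀ j ∈ S, j φ ≤ ℓ φ := fun j hj => by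
    refine hm ℓ hℓS j hj ?_
    have hj_le := hℓmax ▸ hx _ ▸ S.le_sup' (fun ℓ => ℓ ((m : ℝ) • φ + ψ)) hj
    simpa using hj_le
  exact ⟨hℓS, le_antisymm (hx φ ▸ S.le_sup' (fun ℓ => ℓ φ) hℓS) (hx φ ▸ S.sup'_le hS _ hℓ_top)⟩

/-- Subordination lemma, part (2): if `x v = max_{ℓ ∈ S} ℓ v` for a finite nonempty
set `S` of linear functionals on a finite-dimensional real vector space `V`, and
`Argmax v = {ℓ ∈ S | ℓ v = x v}`, then for any `φ ψ : V` there is an `m : ℕ` with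
`Argmax (m • φ + ψ) ⊆ Argmax φ`, i.e. `φ` is subordinate to `m • φ + ψ`. -/
theorem exists_subordinate_perturbation
    {V : Type*} [AddCommGroup V] [Module ℝ V] [FiniteDimensional ℝ V]
    (S : Finset (V →ₗ[ℝ] ℝ)) (hS : S.Nonempty)
    (x : V → ℝ) (hx : ∀ v, x v = S.sup' hS (fun ℓ => ℓ v))
    (Argmax : V → Set (V →ₗ[ℝ] ℝ))
    (hA : ∀ v, Argmax v = {ℓ | ℓ ∈ S ∧ ℓ v = x v})
    (φ ψ : V) :
    ∃ m : ℕ, Argmax ((m : ℝ) • φ + ψ) ⊆ Argmax φ :=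
  exists_subordinate_perturbation_general S hS x hx Argmax hA φ ψ
end

section
/- Let V be a finite-dimensional real vector space, S a finite nonempty set of linear functionals on V, x(v) = max_{ℓ ∈ S} ℓ(v), and Argmax(v) = {ℓ ∈ S : ℓ(v) = x(v)}. Let φ, ψ ∈ V and m ∈ ℕ. If Argmax(mφ + ψ) ⊆ Argmax(φ), then for every natural number k ≥ m one has Argmax(kφ + ψ) ⊆ Argmax(φ). (This is part (3) of the subordination lemma: if φ is subordinate to mφ + ψ, then φ is subordinate to kφ + ψ for all k ≥ m.) -/
/-! Write `kφ + ψ = (k - m)φ + (mφ + ψ)`. Pick `ℓ₀` maximising `mφ + ψ`; by hypothesis it also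
maximises `φ`, hence `(k - m)φ`, so `ℓ₀` maximises both summands at once. Then any maximiser
of the sum must maximise each summand, in particular `mφ + ψ`, and the hypothesis applies again. -/

theorem Finset.eq_sup'_iff_isMaxOn {ι α : Type*} [LinearOrder α] {s : Finset ι}
    (hs : s.Nonempty) {f : ι → α} {i : ι} (hi : i ∈ s) :
    f i = s.sup' hs f ↔ IsMaxOn f s i := by
  rw [isMaxOn_iff]
  refine ⟨fun h j hj => h ▸ s.le_sup' f hj, fun h => ?_⟩
  exact le_antisymm (s.le_sup' f hi) (s.sup'_le hs f h)

theorem IsMaxOn.right_of_add {ι α : Type*} [AddCommMonoid α] [PartialOrder α]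
    [IsOrderedCancelAddMonoid α] {s : Set ι} {f g : ι → α} {i j : ι}
    (hf : IsMaxOn f s j) (hg : IsMaxOn g s j) (hfg : IsMaxOn (fun x => f x + g x) s i)
    (hi : i ∈ s) (hj : j ∈ s) : IsMaxOn g s i := by
  rw [isMaxOn_iff] at hf hg hfg ⊢
  have hgj : g j ≤ g i :=
    le_of_add_le_add_left ((add_le_add (hf i hi) le_rfl).trans (hfg j hj))
  exact fun x hx => (hg x hx).trans hgj

theorem IsMaxOn.apply_smul_of_nonneg {R M : Type*} [CommSemiring R] [PartialOrder R]
    [IsOrderedRing R] [AddCommMonoid M] [Module R M] {s : Set (M →ₗ[R] R)} {ℓ₀ : M →ₗ[R] R} {v : M} {c : R}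
    (h : IsMaxOn (fun ℓ : M →ₗ[R] R => ℓ v) s ℓ₀) (hc : 0 ≤ c) :
    IsMaxOn (fun ℓ : M →ₗ[R] R => ℓ (c • v)) s ℓ₀ := by
  rw [isMaxOn_iff] at h ⊢
  intro ℓ hℓ
  simpa only [map_smul, smul_eq_mul] using mul_le_mul_of_nonneg_left (h ℓ hℓ) hc

theorem subordinate_perturbation_monotone_general
    {V : Type*} [AddCommGroup V] [Module ℝ V]
    (S : Finset (V →ₗ[ℝ] ℝ)) (hS : S.Nonempty)
    (x : V → ℝ) (hx : ∀ v, x v = S.sup' hS (fun ℓ => ℓ v))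
    (Argmax : V → Set (V →ₗ[ℝ] ℝ))
    (hA : ∀ v, Argmax v = {ℓ | ℓ ∈ S ∧ ℓ v = x v})
    (φ ψ : V) (m : ℕ)
    (hm : Argmax ((m : ℝ) • φ + ψ) ⊆ Argmax φ) :
    ∀ k : ℕ, m ≤ k → Argmax ((k : ℝ) • φ + ψ) ⊆ Argmax φ := by
  have mem_argmax : ∀ v ℓ, ℓ ∈ Argmax v ↔ ℓ ∈ S ∧ IsMaxOn (fun ℓ : V →ₗ[ℝ] ℝ => ℓ v) S ℓ :=
    fun v ℓ => by
      rw [hA, Set.mem_ofPred_eq, hx]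
      exact and_congr_right (Finset.eq_sup'_iff_isMaxOn (f := fun ℓ : V →ₗ[ℝ] ℝ => ℓ v) hS)
  intro k hk ℓ hℓ
  obtain ⟨ℓ₀, hℓ₀S, hℓ₀⟩ := S.exists_max_image (fun ℓ => ℓ ((m : ℝ) • φ + ψ)) hS
  replace hℓ₀ : IsMaxOn (fun ℓ : V →ₗ[ℝ] ℝ => ℓ ((m : ℝ) • φ + ψ)) S ℓ₀ := isMaxOn_iff.2 hℓ₀
  have hℓ₀φ := ((mem_argmax _ _).1 (hm ((mem_argmax _ _).2 ⟨hℓ₀S, hℓ₀⟩))).2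
  have hc : (0 : ℝ) ≤ k - m := sub_nonneg.2 (Nat.cast_le.2 hk)
  have hsplit : (k : ℝ) • φ + ψ = ((k : ℝ) - m) • φ + ((m : ℝ) • φ + ψ) := by module
  obtain ⟨hℓS, hℓmax⟩ := (mem_argmax _ _).1 hℓ
  rw [hsplit] at hℓmax
  have hℓm := (hℓ₀φ.apply_smul_of_nonneg hc).right_of_add hℓ₀
    (by simpa only [map_add] using hℓmax) hℓS hℓ₀S
  exact hm ((mem_argmax _ _).2 ⟨hℓS, hℓm⟩)

/-- Subordination lemma, part (3): with `x v = max_{ℓ ∈ S} ℓ v` and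
`Argmax v = {ℓ ∈ S | ℓ v = x v}` for a finite nonempty set `S` of linear functionals
on a finite-dimensional real vector space, if `Argmax (m • φ + ψ) ⊆ Argmax φ`, then
`Argmax (k • φ + ψ) ⊆ Argmax φ` for every `k ≥ m`. -/
theorem subordinate_perturbation_monotone
    {V : Type*} [AddCommGroup V] [Module ℝ V] [FiniteDimensional ℝ V]
    (S : Finset (V →ₗ[ℝ] ℝ)) (hS : S.Nonempty)
    (x : V → ℝ) (hx : ∀ v, x v = S.sup' hS (fun ℓ => ℓ v))
    (Argmax : V → Set (V →ₗ[ℝ] ℝ))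
    (hA : ∀ v, Argmax v = {ℓ | ℓ ∈ S ∧ ℓ v = x v})
    (φ ψ : V) (m : ℕ)
    (hm : Argmax ((m : ℝ) • φ + ψ) ⊆ Argmax φ) :
    ∀ k : ℕ, m ≤ k → Argmax ((k : ℝ) • φ + ψ) ⊆ Argmax φ :=
  subordinate_perturbation_monotone_general S hS x hx Argmax hA φ ψ m hm
end
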